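/- arXiv:1903.10853 — 5 statements merged into one kernel-verified Lean document; each statement's English description precedes it below -/
import Mathlib

section
/- For every complex number z = x + i·y with x > 0 and y ≠ 0, the sequence c_N(z) = (∑_{n=1}^{N} n^{-z}) + (N+1)^{-z}/(1−z) · (1 − x − y/tan(y·ln((N+2)/(N+1)))) converges, as N → ∞, to ζ(z), the value at z of the analytically continued Riemann zeta function. -/
open Filter

/-- The `N`-th partial sum of the Riemann series: `ζ_N(z) = ∑_{n=1}^{N} n^{-z}`. -/
noncomputable def zetaPartial (z : ℂ) (N : ℕ) : ℂ :=
  ∑ n ∈ Finset.Icc 1 N, (n : ℂ) ^ (-z)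

/-- The correction term
`r_N(z) = (N+1)^{-z}/(1−z) · (1 − x − y/tan(y·ln((N+2)/(N+1))))` where `x = Re z`, `y = Im z`. -/
noncomputable def radialCorrection (z : ℂ) (N : ℕ) : ℂ :=
  ((N : ℂ) + 1) ^ (-z) / (1 - z) *
    ((1 - z.re - z.im / Real.tan (z.im * Real.log (((N : ℝ) + 2) / ((N : ℝ) + 1))) : ℝ) : ℂ)

/-- The radial-convergence sequence `c_N(z) = ζ_N(z) + r_N(z)`. -/
noncomputable def radialSeq (z : ℂ) (N : ℕ) : ℂ :=
  zetaPartial z N + radialCorrection z N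

/-!
Put `t_N = log ((N + 2) / (N + 1))`, so that `N + 1 = 1 / (exp t_N - 1)`. Then
`c_N(z) = (ζ_N(z) + (N + 1)^{1-z} / (z - 1)) + (N + 1)^{-z} e_N / (1 - z)` with
`e_N = 1 + (1 / (exp t_N - 1) - 1 / t_N) + y (1 / (y t_N) - cot (y t_N)) - x`.
As `t_N → 0⁺`, the two brackets tend to `-1/2` and `0` (second-order Taylor expansions), so `e_N`
converges and the second summand tends to `0` because `x > 0`.

The first summand equals `∑_{n=1}^{N} (n^{-z} - ∫_n^{n+1} t^{-z} dt) + 1 / (z - 1)`, whose terms are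
`O(|z| n^{-x-1})`. Hence it converges locally uniformly on the punctured half-plane `Re z > 0`,
`z ≠ 1`, to a holomorphic function which equals `ζ` for `Re z > 1`, and so everywhere on that
connected domain by the identity theorem.
-/

open Topology

section RealLimits

open Real

theorem tendsto_sub_deriv_mul_div_sq {f f' : ℝ → ℝ} {b : ℝ}
    (hf : ∀ᶠ x in 𝓝 0, HasDerivAt f (f' x) x) (hf0 : f 0 = 0) (hf' : HasDerivAt f' b 0) :
    Tendsto (fun x => (f x - f' 0 * x) / x ^ 2) (𝓝[≠] 0) (𝓝 (b / 2)) := by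
  have hslope : Tendsto (fun x => (f' x - f' 0) / (2 * x)) (𝓝[≠] 0) (𝓝 (b / 2)) := by
    refine ((hasDerivAt_iff_tendsto_slope.1 hf').div_const 2).congr fun x => ?_
    rw [slope_def_field, sub_zero, div_div, mul_comm]
  have hnum : Tendsto (fun x => f x - f' 0 * x) (𝓝[≠] 0) (𝓝 0) := by
    have hc : ContinuousAt (fun x => f x - f' 0 * x) 0 :=
      hf.self_of_nhds.continuousAt.sub (by fun_prop)
    simpa [hf0] using hc.tendsto.mono_left nhdsWithin_le_nhds
  have hden : Tendsto (fun x : ℝ => x ^ 2) (𝓝[≠] 0) (𝓝 0) := by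
    simpa using ((continuous_pow 2).tendsto (0 : ℝ)).mono_left nhdsWithin_le_nhds
  refine HasDerivAt.lhopital_zero_nhdsNE (f' := fun x => f' x - f' 0) (g' := fun x => 2 * x)
    ?_ ?_ ?_ hnum hden hslope
  · filter_upwards [nhdsWithin_le_nhds hf] with x hx
    exact (hx.fun_sub ((hasDerivAt_id' x).const_mul (f' 0))).congr_deriv (by ring)
  · filter_upwards with x
    simpa using hasDerivAt_pow 2 x
  · filter_upwards [self_mem_nhdsWithin] with x hx
    exact mul_ne_zero two_ne_zero hx

theorem tendsto_exp_sub_one_div : Tendsto (fun s => (exp s - 1) / s) (𝓝[≠] 0) (𝓝 1) := by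
  simpa [slope_fun_def, div_eq_inv_mul] using hasDerivAt_iff_tendsto_slope.1 (hasDerivAt_exp 0)

theorem tendsto_sin_div : Tendsto (fun u => sin u / u) (𝓝[≠] 0) (𝓝 1) := by
  simpa [slope_fun_def, div_eq_inv_mul] using hasDerivAt_iff_tendsto_slope.1 (hasDerivAt_sin 0)

theorem tendsto_inv_exp_sub_one_sub_inv :
    Tendsto (fun s => (exp s - 1)⁻¹ - s⁻¹) (𝓝[≠] 0) (𝓝 (-(1 / 2))) := by
  have hquad := tendsto_sub_deriv_mul_div_sq (f := fun s => exp s - 1) (f' := exp) (b := 1)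
    (.of_forall fun s => (hasDerivAt_exp s).sub_const 1) (by simp) (by simpa using hasDerivAt_exp 0)
  have hratio := tendsto_exp_sub_one_div.inv₀ one_ne_zero
  have hne := tendsto_exp_sub_one_div.eventually_ne one_ne_zero
  refine ((hquad.mul hratio).neg.congr' ?_).trans (by norm_num)
  filter_upwards [self_mem_nhdsWithin, hne] with s (hs : s ≠ 0) he
  have he : exp s - 1 ≠ 0 := (div_ne_zero_iff.1 he).1
  field_simp
  simp only [exp_zero, one_mul]
  ring

theorem tendsto_inv_sub_inv_tan : Tendsto (fun u => u⁻¹ - (tan u)⁻¹) (𝓝[≠] 0) (𝓝 0) := by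
  have hquad := tendsto_sub_deriv_mul_div_sq (f := fun u => sin u - u * cos u)
    (f' := fun u => u * sin u) (b := 0)
    (.of_forall fun u =>
      ((hasDerivAt_sin u).fun_sub ((hasDerivAt_id' u).fun_mul (hasDerivAt_cos u))).congr_deriv
        (by ring))
    (by simp) (by simpa using (hasDerivAt_id' 0).fun_mul (hasDerivAt_sin 0))
  have hratio := tendsto_sin_div.inv₀ one_ne_zero
  have hne := tendsto_sin_div.eventually_ne one_ne_zero
  refine ((hquad.mul hratio).congr' ?_).trans (by norm_num)
  filter_upwards [self_mem_nhdsWithin, hne] with u (hu : u ≠ 0) hs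
  have hs : sin u ≠ 0 := (div_ne_zero_iff.1 hs).1
  rw [tan_eq_sin_div_cos, inv_div]
  field_simp
  simp only [mul_zero, sin_zero, sub_zero]

theorem tendsto_log_add_two_div_add_one :
    Tendsto (fun N : ℕ => log (((N : ℝ) + 2) / ((N : ℝ) + 1))) atTop (𝓝[≠] 0) := by
  have hratio : Tendsto (fun N : ℕ => ((N : ℝ) + 2) / ((N : ℝ) + 1)) atTop (𝓝 1) := by
    have h := tendsto_one_div_add_atTop_nhds_zero_nat.const_add (1 : ℝ)
    rw [add_zero] at h
    refine h.congr fun N => ?_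
    field_simp
    ring
  have hlog := (continuousAt_log one_ne_zero).tendsto.comp hratio
  rw [log_one] at hlog
  refine tendsto_nhdsWithin_iff.2 ⟨hlog, .of_forall fun N => (log_pos ?_).ne'⟩
  rw [one_lt_div (by positivity)]
  linarith

theorem tendsto_add_two_sub_div_tan {y : ℝ} (hy : y ≠ 0) :
    Tendsto (fun N : ℕ => (N : ℝ) + 2 - y / tan (y * log (((N : ℝ) + 2) / ((N : ℝ) + 1))))
      atTop (𝓝 (1 / 2)) := by
  set t := fun N : ℕ => log (((N : ℝ) + 2) / ((N : ℝ) + 1))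
  have ht : Tendsto t atTop (𝓝[≠] 0) := tendsto_log_add_two_div_add_one
  have hyt : Tendsto (fun N => y * t N) atTop (𝓝[≠] 0) := by
    refine tendsto_nhdsWithin_iff.2 ⟨?_, ?_⟩
    · simpa using (tendsto_nhdsWithin_iff.1 ht).1.const_mul y
    · filter_upwards [(tendsto_nhdsWithin_iff.1 ht).2] with N hN using mul_ne_zero hy hN
  have hlim := ((tendsto_inv_exp_sub_one_sub_inv.comp ht).add
    ((tendsto_inv_sub_inv_tan.comp hyt).const_mul y)).const_add 1
  refine (hlim.congr fun N => ?_).trans (by norm_num)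
  have hexp : exp (t N) - 1 = ((N : ℝ) + 1)⁻¹ := by
    rw [exp_log (by positivity)]
    field_simp
    ring
  change 1 + ((exp (t N) - 1)⁻¹ - (t N)⁻¹ + y * ((y * t N)⁻¹ - (tan (y * t N))⁻¹))
    = N + 2 - y / tan (y * t N)
  rw [hexp, inv_inv, mul_sub, mul_inv, ← mul_assoc, mul_inv_cancel₀ hy, one_mul, div_eq_mul_inv]
  ring

end RealLimits

open Complex Finset

theorem summable_rpow_nat_add_one {p : ℝ} (hp : p < -1) :
    Summable fun n : ℕ => ((n : ℝ) + 1) ^ p := by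
  simpa using (summable_nat_add_iff 1).2 (Real.summable_nat_rpow.2 hp)

theorem isPreconnected_re_pos_diff_one : IsPreconnected ({w : ℂ | 0 < w.re} \ {1}) := by
  have hupper := (convex_halfSpace_re_gt 0).inter (convex_halfSpace_im_gt 0)
  have hlower := (convex_halfSpace_re_gt 0).inter (convex_halfSpace_im_lt 0)
  have hstrip := (convex_halfSpace_re_gt 0).inter (convex_halfSpace_re_lt 1)
  have hright := convex_halfSpace_re_gt (1 : ℝ)
  have hcover : {w : ℂ | 0 < w.re} \ {1} = (({w : ℂ | 0 < w.re} ∩ {w | 0 < w.im}) ∪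
      ({w | 0 < w.re} ∩ {w | w.re < 1}) ∪ {w | 1 < w.re}) ∪ ({w | 0 < w.re} ∩ {w | w.im < 0}) := by
    ext w
    simp only [Set.mem_sdiff, Set.mem_union, Set.mem_inter_iff, Set.mem_ofPred_eq,
      Set.mem_singleton_iff, Complex.ext_iff, one_re, one_im]
    grind
  rw [hcover]
  refine (((hupper.isPreconnected.union (1 / 2 + I) ?_ ?_ hstrip.isPreconnected).union (2 + I) ?_ ?_
    hright.isPreconnected).union (2 - I) ?_ ?_ hlower.isPreconnected) <;> norm_num

theorem zetaPartial_eq_sum_range (z : ℂ) (N : ℕ) :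
    zetaPartial z N = ∑ n ∈ range N, ((n : ℂ) + 1) ^ (-z) := by
  rw [zetaPartial, ← Ico_add_one_right_eq_Icc, sum_Ico_eq_sum_range, add_tsub_cancel_right]
  push_cast
  simp only [add_comm]

theorem tendsto_natCast_add_one_cpow_of_re_neg {s : ℂ} (hs : s.re < 0) :
    Tendsto (fun N : ℕ => ((N : ℂ) + 1) ^ s) atTop (𝓝 0) := by
  rw [tendsto_zero_iff_norm_tendsto_zero]
  have hnorm (N : ℕ) : ‖((N : ℂ) + 1) ^ s‖ = ((N : ℝ) + 1) ^ s.re := by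
    simpa using norm_natCast_cpow_of_pos N.succ_pos s
  simp only [hnorm]
  have hN : Tendsto (fun N : ℕ => (N : ℝ) + 1) atTop atTop :=
    tendsto_natCast_atTop_atTop.atTop_add tendsto_const_nhds
  simpa [Function.comp_def] using (tendsto_rpow_neg_atTop (neg_pos.2 hs)).comp hN

section ZetaContinuation

variable {w : ℂ}

theorem tendsto_zetaPartial_add_cpow_div_of_one_lt_re (hw : 1 < w.re) :
    Tendsto (fun N : ℕ => zetaPartial w N + ((N : ℂ) + 1) ^ (1 - w) / (w - 1)) atTop
      (𝓝 (riemannZeta w)) := by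
  have hsum : Summable fun n : ℕ => ((n : ℂ) + 1) ^ (-w) := by
    simpa [cpow_neg] using (summable_nat_add_iff 1).2 (Complex.summable_one_div_nat_cpow.2 hw)
  have hzeta : riemannZeta w = ∑' n : ℕ, ((n : ℂ) + 1) ^ (-w) := by
    simp [zeta_eq_tsum_one_div_nat_add_one_cpow hw, cpow_neg]
  have hpow := (tendsto_natCast_add_one_cpow_of_re_neg (s := 1 - w)
    (by rw [sub_re, one_re]; linarith)).div_const (w - 1)
  simp_rw [zetaPartial_eq_sum_range]
  simpa [hzeta] using hsum.hasSum.tendsto_sum_nat.add hpow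

noncomputable def zetaDefect (w : ℂ) (n : ℕ) : ℂ :=
  (n : ℂ) ^ (-w) - (((n : ℂ) + 1) ^ (1 - w) - (n : ℂ) ^ (1 - w)) / (1 - w)

theorem zetaDefect_eq_integral (hw : w ≠ 1) {n : ℕ} (hn : 0 < n) :
    zetaDefect w n = ∫ t : ℝ in n..n + 1, ((n : ℂ) ^ (-w) - (t : ℂ) ^ (-w)) := by
  have h0 : (0 : ℝ) ∉ Set.uIcc (n : ℝ) (n + 1) := by
    rw [Set.uIcc_of_le (by linarith)]
    exact fun h => (Nat.cast_pos.2 hn).not_ge h.1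
  rw [intervalIntegral.integral_sub intervalIntegrable_const
      (intervalIntegral.intervalIntegrable_cpow (.inr h0)), intervalIntegral.integral_const,
    integral_cpow (.inr ⟨by simpa using hw, h0⟩), show -w + 1 = 1 - w by ring, zetaDefect]
  push_cast
  simp

theorem norm_cpow_sub_cpow_le (hw : -1 ≤ w.re) {a t : ℝ} (ha : 0 < a) (hat : a ≤ t) :
    ‖(t : ℂ) ^ (-w) - (a : ℂ) ^ (-w)‖ ≤ ‖w‖ * a ^ (-w.re - 1) * (t - a) := by
  refine norm_image_sub_le_of_norm_deriv_le_segment' (f := fun s : ℝ => (s : ℂ) ^ (-w))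
    (f' := fun s => -w * (s : ℂ) ^ (-w - 1))
    (fun s hs => ?_) (fun s hs => ?_) t ⟨hat, le_rfl⟩
  · exact ((hasStrictDerivAt_cpow_const (ofReal_mem_slitPlane.2 (ha.trans_le hs.1))).hasDerivAt
      |>.comp_ofReal).hasDerivWithinAt
  · rw [norm_mul, norm_neg, norm_cpow_eq_rpow_re_of_pos (ha.trans_le hs.1)]
    have hre : (-w - 1).re = -w.re - 1 := by simp
    rw [hre]
    exact mul_le_mul_of_nonneg_left (Real.rpow_le_rpow_of_nonpos ha hs.1 (by linarith))
      (norm_nonneg w)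

theorem norm_zetaDefect_le (hw : -1 ≤ w.re) (hw1 : w ≠ 1) {n : ℕ} (hn : 0 < n) :
    ‖zetaDefect w n‖ ≤ ‖w‖ * (n : ℝ) ^ (-w.re - 1) := by
  have hn' : (0 : ℝ) < n := Nat.cast_pos.2 hn
  rw [zetaDefect_eq_integral hw1 hn]
  refine (intervalIntegral.norm_integral_le_of_norm_le_const
    (C := ‖w‖ * (n : ℝ) ^ (-w.re - 1)) fun t ht => ?_).trans_eq (by simp)
  rw [Set.uIoc_of_le (by linarith)] at ht
  rw [norm_sub_rev]
  calc ‖(t : ℂ) ^ (-w) - (n : ℂ) ^ (-w)‖ ≤ ‖w‖ * (n : ℝ) ^ (-w.re - 1) * (t - n) := by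
        simpa using norm_cpow_sub_cpow_le hw hn' ht.1.le
    _ ≤ ‖w‖ * (n : ℝ) ^ (-w.re - 1) * 1 := by gcongr; linarith [ht.2]
    _ = ‖w‖ * (n : ℝ) ^ (-w.re - 1) := mul_one _

theorem sum_range_zetaDefect (N : ℕ) :
    ∑ n ∈ range N, zetaDefect w (n + 1)
      = zetaPartial w N - (((N : ℂ) + 1) ^ (1 - w) - 1) / (1 - w) := by
  have htel := sum_range_sub (fun n : ℕ => ((n : ℂ) + 1) ^ (1 - w)) N
  simp only [Nat.cast_add_one, Nat.cast_zero, zero_add, one_cpow] at htel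
  simp only [zetaDefect, sum_sub_distrib, ← sum_div, zetaPartial_eq_sum_range, Nat.cast_add_one,
    htel]

theorem differentiableAt_zetaDefect (hw : w ≠ 1) {n : ℕ} (hn : n ≠ 0) :
    DifferentiableAt ℂ (fun v => zetaDefect v n) w := by
  have hn' : (n : ℂ) ≠ 0 := Nat.cast_ne_zero.2 hn
  have hn1 : (n : ℂ) + 1 ≠ 0 := by exact_mod_cast n.succ_ne_zero
  unfold zetaDefect
  fun_prop (disch := first | exact .inl hn' | exact .inl hn1 | exact sub_ne_zero.2 hw.symm)

theorem norm_zetaDefect_succ_le (hw1 : w ≠ 1) {δ R : ℝ} (hδ : -1 ≤ δ) (hδw : δ ≤ w.re)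
    (hR : ‖w‖ ≤ R) (n : ℕ) :
    ‖zetaDefect w (n + 1)‖ ≤ R * ((n : ℝ) + 1) ^ (-δ - 1) := by
  have hn : (1 : ℝ) ≤ (n : ℝ) + 1 := by linarith [n.cast_nonneg (α := ℝ)]
  calc ‖zetaDefect w (n + 1)‖ ≤ ‖w‖ * ((n : ℝ) + 1) ^ (-w.re - 1) := by
        simpa using norm_zetaDefect_le (hδ.trans hδw) hw1 n.succ_pos
    _ ≤ R * ((n : ℝ) + 1) ^ (-δ - 1) :=
        mul_le_mul hR (Real.rpow_le_rpow_of_exponent_le hn (by linarith)) (by positivity)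
          ((norm_nonneg w).trans hR)

theorem differentiableAt_tsum_zetaDefect (hw : 0 < w.re) (hw1 : w ≠ 1) :
    DifferentiableAt ℂ (fun v => ∑' n : ℕ, zetaDefect v (n + 1)) w := by
  set V := {v : ℂ | w.re / 2 < v.re ∧ ‖v‖ < ‖w‖ + 1} \ {1}
  have hV : IsOpen V := ((isOpen_lt continuous_const continuous_re).inter
    (isOpen_lt continuous_norm continuous_const)).sdiff isClosed_singleton
  have hwV : w ∈ V := ⟨⟨by linarith, by linarith⟩, hw1⟩
  refine (differentiableOn_tsum_of_summable_norm
    ((summable_rpow_nat_add_one (p := -(w.re / 2) - 1) (by linarith)).mul_left (‖w‖ + 1))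
    (fun n v hv => (differentiableAt_zetaDefect hv.2 n.succ_ne_zero).differentiableWithinAt)
    hV fun n v hv => ?_).differentiableAt (hV.mem_nhds hwV)
  exact norm_zetaDefect_succ_le hv.2 (by linarith) hv.1.1.le hv.1.2.le n

theorem tendsto_zetaPartial_add_cpow_div_tsum (hw : 0 < w.re) (hw1 : w ≠ 1) :
    Tendsto (fun N : ℕ => zetaPartial w N + ((N : ℂ) + 1) ^ (1 - w) / (w - 1)) atTop
      (𝓝 (∑' n : ℕ, zetaDefect w (n + 1) + 1 / (w - 1))) := by
  have hsum : Summable fun n : ℕ => zetaDefect w (n + 1) :=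
    .of_norm_bounded ((summable_rpow_nat_add_one (p := -w.re - 1) (by linarith)).mul_left ‖w‖)
      (norm_zetaDefect_succ_le hw1 (by linarith) le_rfl le_rfl)
  have h1w : 1 - w ≠ 0 := sub_ne_zero.2 hw1.symm
  have hw1' : w - 1 ≠ 0 := sub_ne_zero.2 hw1
  refine (hsum.hasSum.tendsto_sum_nat.add_const (1 / (w - 1))).congr fun N => ?_
  rw [sum_range_zetaDefect]
  field_simp
  ring

theorem tsum_zetaDefect_add_eq_riemannZeta (hw : 0 < w.re) (hw1 : w ≠ 1) :
    ∑' n : ℕ, zetaDefect w (n + 1) + 1 / (w - 1) = riemannZeta w := by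
  set U := {v : ℂ | 0 < v.re} \ {1}
  have hU : IsOpen U := (isOpen_lt continuous_const continuous_re).sdiff isClosed_singleton
  have hF : DifferentiableOn ℂ (fun v => ∑' n : ℕ, zetaDefect v (n + 1) + 1 / (v - 1)) U :=
    fun v hv => ((differentiableAt_tsum_zetaDefect hv.1 hv.2).add
      (by fun_prop (disch := exact sub_ne_zero.2 hv.2))).differentiableWithinAt
  have hζ : DifferentiableOn ℂ riemannZeta U :=
    fun v hv => (differentiableAt_riemannZeta hv.2).differentiableWithinAt
  have hright : Set.EqOn (fun v => ∑' n : ℕ, zetaDefect v (n + 1) + 1 / (v - 1)) riemannZeta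
      {v | 1 < v.re} := fun v hv => tendsto_nhds_unique
    (tendsto_zetaPartial_add_cpow_div_tsum (by linarith [hv.out]) (by rintro rfl; simp at hv))
    (tendsto_zetaPartial_add_cpow_div_of_one_lt_re hv)
  have h2 : (2 : ℂ) ∈ {v : ℂ | 1 < v.re} := by norm_num
  exact (hF.analyticOnNhd hU).eqOn_of_preconnected_of_eventuallyEq (hζ.analyticOnNhd hU)
    isPreconnected_re_pos_diff_one (z₀ := 2) ⟨by norm_num, by norm_num⟩
    (hright.eventuallyEq_of_mem ((isOpen_lt continuous_const continuous_re).mem_nhds h2)) ⟨hw, hw1⟩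

theorem tendsto_zetaPartial_add_cpow_div (hw : 0 < w.re) (hw1 : w ≠ 1) :
    Tendsto (fun N : ℕ => zetaPartial w N + ((N : ℂ) + 1) ^ (1 - w) / (w - 1)) atTop
      (𝓝 (riemannZeta w)) :=
  tsum_zetaDefect_add_eq_riemannZeta hw hw1 ▸ tendsto_zetaPartial_add_cpow_div_tsum hw hw1

end ZetaContinuation

theorem radialSeq_eq {z : ℂ} (hz : z ≠ 1) (N : ℕ) :
    radialSeq z N = (zetaPartial z N + ((N : ℂ) + 1) ^ (1 - z) / (z - 1)) +
      ((N : ℂ) + 1) ^ (-z) * (((N : ℝ) + 2 - z.im / Real.tan (z.im *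
        Real.log (((N : ℝ) + 2) / ((N : ℝ) + 1))) - z.re : ℝ) : ℂ) / (1 - z) := by
  have hN : (N : ℂ) + 1 ≠ 0 := by exact_mod_cast N.succ_ne_zero
  have hpow : ((N : ℂ) + 1) ^ (1 - z) = ((N : ℂ) + 1) * ((N : ℂ) + 1) ^ (-z) := by
    rw [sub_eq_add_neg, cpow_add _ _ hN, cpow_one]
  have h1z : 1 - z ≠ 0 := sub_ne_zero.2 hz.symm
  have hz1 : z - 1 ≠ 0 := sub_ne_zero.2 hz
  rw [radialSeq, radialCorrection, hpow]
  push_cast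
  field_simp
  ring

/-- For every `z = x + i·y` with `x > 0` and `y ≠ 0`, the radial-convergence sequence
`c_N(z)` converges to the analytically continued Riemann zeta function at `z`. -/
theorem radialSeq_tendsto_riemannZeta (z : ℂ) (hx : 0 < z.re) (hy : z.im ≠ 0) :
    Tendsto (fun N : ℕ => radialSeq z N) atTop (nhds (riemannZeta z)) := by
  have hz : z ≠ 1 := by rintro rfl; simp at hy
  have hbracket := ((tendsto_add_two_sub_div_tan hy).sub_const z.re).ofReal
  have hcorr := ((tendsto_natCast_add_one_cpow_of_re_neg (s := -z) (by simpa using hx)).mul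
    hbracket).div_const (1 - z)
  simpa [radialSeq_eq hz] using (tendsto_zetaPartial_add_cpow_div hx hz).add hcorr
end

section
/- For every complex number z = x + i·y with x > 1 and y ≠ 0, the correction term r_N(z) = (N+1)^{-z}/(1−z) · (1 − x − y/tan(y·ln((N+2)/(N+1)))) tends to 0 as N → ∞, and consequently the radial-convergence sequence c_N(z) = (∑_{n=1}^{N} n^{-z}) + r_N(z) converges to the sum of the Riemann series ∑_{n=1}^{∞} n^{-z}. -/
open Filter

/-!
Since `|tan θ| ≥ |θ|` for `|θ| < π/2` and `log((N+2)/(N+1)) ≥ 1/(N+2)`, the quotient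
`y / tan(y·log((N+2)/(N+1)))` is `O(N)`, so `r_N(z) = O(N^{1-x})` tends to `0` when `x > 1`.
Hence `c_N(z)` has the same limit as the partial sums `ζ_N(z)`.
-/

open Real

namespace Real

theorem abs_le_abs_tan {θ : ℝ} (h : |θ| < π / 2) : |θ| ≤ |tan θ| := by
  wlog hθ : 0 ≤ θ generalizing θ
  · simpa [tan_neg] using this (θ := -θ) (by rwa [abs_neg]) (by linarith)
  rw [abs_of_nonneg hθ] at h ⊢
  exact (le_tan hθ h).trans (le_abs_self _)

theorem abs_div_tan_mul_le_inv {y L : ℝ} (hL : 0 < L) (h : |y * L| < π / 2) :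
    |y / tan (y * L)| ≤ L⁻¹ := by
  rcases eq_or_ne y 0 with rfl | hy
  -- the left side is the junk value `0 / tan 0 = 0 / 0 = 0`
  · simpa using hL.le
  have hyL : 0 < |y * L| := abs_pos.mpr (mul_ne_zero hy hL.ne')
  calc |y / tan (y * L)| = |y| / |tan (y * L)| := abs_div _ _
    _ ≤ |y| / |y * L| := div_le_div_of_nonneg_left (abs_nonneg y) hyL (abs_le_abs_tan h)
    _ = L⁻¹ := by rw [abs_mul, abs_of_pos hL]; field_simp [abs_ne_zero.mpr hy]

theorem inv_add_one_le_log_add_one_div {t : ℝ} (ht : 0 < t) : (t + 1)⁻¹ ≤ log ((t + 1) / t) := by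
  have h := one_sub_inv_le_log_of_pos (x := (t + 1) / t) (by positivity)
  rwa [inv_div, one_sub_div (by positivity), add_sub_cancel_left, one_div] at h

theorem log_add_one_div_le_inv {t : ℝ} (ht : 0 < t) : log ((t + 1) / t) ≤ t⁻¹ := by
  have h := log_le_sub_one_of_pos (x := (t + 1) / t) (by positivity)
  rwa [div_sub_one ht.ne', add_sub_cancel_left, one_div] at h

end Real

noncomputable abbrev radialStep (N : ℕ) : ℝ :=
  log (((N : ℝ) + 2) / ((N : ℝ) + 1))

theorem radialStep_eq_log_add_one_div (N : ℕ) :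
    radialStep N = log ((((N : ℝ) + 1) + 1) / ((N : ℝ) + 1)) := by
  rw [add_assoc, one_add_one_eq_two]

theorem inv_le_radialStep (N : ℕ) : ((N : ℝ) + 2)⁻¹ ≤ radialStep N := by
  have h := inv_add_one_le_log_add_one_div (t := (N : ℝ) + 1) (by positivity)
  rwa [← radialStep_eq_log_add_one_div, add_assoc, one_add_one_eq_two] at h

theorem radialStep_pos (N : ℕ) : 0 < radialStep N :=
  (inv_pos.mpr (by positivity)).trans_le (inv_le_radialStep N)

theorem tendsto_radialStep_zero : Tendsto radialStep atTop (nhds 0) := by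
  refine squeeze_zero (fun N => (radialStep_pos N).le) (fun N => ?_)
    (tendsto_one_div_add_atTop_nhds_zero_nat (𝕜 := ℝ))
  rw [radialStep_eq_log_add_one_div, one_div]
  exact log_add_one_div_le_inv (by positivity)

theorem norm_natCast_add_one_cpow_neg (z : ℂ) (N : ℕ) :
    ‖((N : ℂ) + 1) ^ (-z)‖ = ((N : ℝ) + 1) ^ (-z.re) := by
  simpa using Complex.norm_natCast_cpow_of_pos N.succ_pos (-z)

theorem norm_radialCorrection_le (z : ℂ) (N : ℕ) (h : |z.im * radialStep N| < π / 2) :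
    ‖radialCorrection z N‖ ≤ (|1 - z.re| + 2) / ‖1 - z‖ * ((N : ℝ) + 1) ^ (1 - z.re) := by
  have hN : (0 : ℝ) < (N : ℝ) + 1 := by positivity
  have hcot : |z.im / tan (z.im * radialStep N)| ≤ (N : ℝ) + 2 := by
    calc _ ≤ (radialStep N)⁻¹ := abs_div_tan_mul_le_inv (radialStep_pos N) h
      _ ≤ (N : ℝ) + 2 := inv_le_of_inv_le₀ (by positivity) (inv_le_radialStep N)
  have hfactor : |1 - z.re - z.im / tan (z.im * radialStep N)| ≤
      (|1 - z.re| + 2) * ((N : ℝ) + 1) := by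
    have := abs_sub (1 - z.re) (z.im / tan (z.im * radialStep N))
    nlinarith [abs_nonneg (1 - z.re)]
  rw [radialCorrection, norm_mul, norm_div, norm_natCast_add_one_cpow_neg, Complex.norm_real,
    Real.norm_eq_abs]
  calc ((N : ℝ) + 1) ^ (-z.re) / ‖1 - z‖ * |1 - z.re - z.im / tan (z.im * radialStep N)|
      ≤ ((N : ℝ) + 1) ^ (-z.re) / ‖1 - z‖ * ((|1 - z.re| + 2) * ((N : ℝ) + 1)) := by
        gcongr
    _ = (|1 - z.re| + 2) / ‖1 - z‖ * ((N : ℝ) + 1) ^ (1 - z.re) := by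
        rw [show 1 - z.re = -z.re + 1 by ring, rpow_add_one hN.ne']
        ring

theorem tendsto_natCast_add_one_rpow_zero {s : ℝ} (hs : s < 0) :
    Tendsto (fun N : ℕ => ((N : ℝ) + 1) ^ s) atTop (nhds 0) := by
  have h := (tendsto_rpow_neg_atTop (neg_pos.mpr hs)).comp
    (tendsto_atTop_add_const_right atTop 1 tendsto_natCast_atTop_atTop)
  simpa [Function.comp_def] using h

theorem tendsto_radialCorrection_zero {z : ℂ} (hx : 1 < z.re) :
    Tendsto (radialCorrection z) atTop (nhds 0) := by
  have hsmall : ∀ᶠ N in atTop, |z.im * radialStep N| < π / 2 := by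
    have h := ((tendsto_radialStep_zero.const_mul z.im).abs)
    simp only [mul_zero, abs_zero] at h
    exact h.eventually_lt_const (by positivity)
  have hbound := (tendsto_natCast_add_one_rpow_zero (sub_neg.mpr hx)).const_mul
    ((|1 - z.re| + 2) / ‖1 - z‖)
  rw [mul_zero] at hbound
  exact squeeze_zero_norm' (hsmall.mono fun N => norm_radialCorrection_le z N) hbound

theorem tendsto_zetaPartial_tsum {z : ℂ} (hx : 1 < z.re) :
    Tendsto (zetaPartial z) atTop (nhds (∑' n : ℕ, ((n : ℂ) + 1) ^ (-z))) := by
  have hsum : Summable (fun n : ℕ => ((n : ℂ) + 1) ^ (-z)) := by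
    refine ((summable_nat_add_iff 1).mpr (Complex.summable_one_div_nat_cpow.mpr hx)).congr
      fun n => ?_
    rw [Nat.cast_add_one, one_div, Complex.cpow_neg]
  refine hsum.hasSum.tendsto_sum_nat.congr fun N => ?_
  rw [zetaPartial, ← Finset.Ico_add_one_right_eq_Icc, Finset.sum_Ico_eq_sum_range,
    add_tsub_cancel_right]
  simp only [Nat.cast_add, Nat.cast_one, add_comm (1 : ℂ)]

theorem radialCorrection_tendsto_zero_and_radialSeq_tendsto_tsum_general (z : ℂ)
    (hx : 1 < z.re) :
    Tendsto (fun N : ℕ => radialCorrection z N) atTop (nhds 0) ∧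
    Tendsto (fun N : ℕ => radialSeq z N) atTop
      (nhds (∑' n : ℕ, ((n : ℂ) + 1) ^ (-z))) := by
  have hr := tendsto_radialCorrection_zero hx
  refine ⟨hr, ?_⟩
  simpa only [radialSeq, add_zero] using (tendsto_zetaPartial_tsum hx).add hr

/-- For `z = x + i·y` with `x > 1` and `y ≠ 0`, the correction term `r_N(z)` tends to `0`,
and consequently the radial-convergence sequence `c_N(z)` converges to the sum of the
Riemann series `∑_{n=1}^{∞} n^{-z}`. -/
theorem radialCorrection_tendsto_zero_and_radialSeq_tendsto_tsum (z : ℂ)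
    (hx : 1 < z.re) (hy : z.im ≠ 0) :
    Tendsto (fun N : ℕ => radialCorrection z N) atTop (nhds 0) ∧
    Tendsto (fun N : ℕ => radialSeq z N) atTop
      (nhds (∑' n : ℕ, ((n : ℂ) + 1) ^ (-z))) :=
  radialCorrection_tendsto_zero_and_radialSeq_tendsto_tsum_general z hx
end

section
/- Let y be a nonzero real number. Then n² · | 1/((n+1)·tan(|y|·ln((n+2)/(n+1)))) − sqrt( 1/n² + 1/(n²·tan(|y|·ln((n+1)/n))²) ) | converges, as the natural number n → ∞, to (1/2)·|y + 1/y|. -/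
/-! For `0 < t < π / 2` the square root equals `1 / (n sin t)`, so with
`tₙ = |y| log (1 + 1/n)` the quantity is
`n² |n sin tₙ - (n + 1) tan tₙ₊₁| / ((n + 1) tan tₙ₊₁ · n sin tₙ)`.
The denominator tends to `y²`. The numerator splits into `n³ (sin tₙ - tₙ) → -|y|³/6`,
`-n² (n + 1) (tan tₙ₊₁ - tₙ₊₁) → -|y|³/3` and `n² (n tₙ - (n + 1) tₙ₊₁) → -|y|/2`, the last
one because `m log (1 + 1/m) = 1 - 1/(2m) + 1/(3m²) + O(m⁻³)`. Hence the limit is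
`(|y| + |y|³) / (2 y²) = |y + 1/y| / 2`. -/

open Filter Real Topology

lemma sqrt_one_div_sq_add_one_div_sq_mul_tan_sq {x t : ℝ} (hx : 0 < x) (ht : 0 < sin t) :
    √(1 / x ^ 2 + 1 / (x ^ 2 * tan t ^ 2)) = 1 / (x * sin t) := by
  have hsq : 1 / x ^ 2 + 1 / (x ^ 2 * tan t ^ 2) = (1 / (x * sin t)) ^ 2 := by
    rw [tan_eq_sin_div_cos, div_pow, mul_div_assoc', one_div_div]
    field_simp
    rw [sin_sq_add_cos_sq]
  rw [hsq, sqrt_sq (by positivity)]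

lemma tendsto_div_pow_three_of_abs_sub_le {f : ℝ → ℝ} {c K : ℝ}
    (hf : ∀ x, |x| ≤ 1 → |f x - c * x ^ 3| ≤ K * |x| ^ 4) :
    Tendsto (fun x => f x / x ^ 3) (𝓝[≠] 0) (𝓝 c) := by
  have hbound : ∀ᶠ x in 𝓝[≠] (0 : ℝ), ‖f x / x ^ 3 - c‖ ≤ K * |x| := by
    filter_upwards [self_mem_nhdsWithin,
      nhdsWithin_le_nhds (Metric.closedBall_mem_nhds (0 : ℝ) one_pos)] with x hx0 hx1
    rw [mem_closedBall_zero_iff, norm_eq_abs] at hx1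
    have hx3 : x ^ 3 ≠ 0 := pow_ne_zero 3 hx0
    rw [norm_eq_abs, show f x / x ^ 3 - c = (f x - c * x ^ 3) / x ^ 3 by
      rw [sub_div, mul_div_cancel_right₀ _ hx3], abs_div, abs_pow,
      div_le_iff₀ (pow_pos (abs_pos.2 hx0) 3)]
    calc _ ≤ K * |x| ^ 4 := hf x hx1
      _ = K * |x| * |x| ^ 3 := by ring
  have hK : Tendsto (fun x : ℝ => K * |x|) (𝓝[≠] 0) (𝓝 0) :=
    ((continuous_const.mul continuous_abs).tendsto' 0 0 (by simp)).mono_left nhdsWithin_le_nhds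
  exact tendsto_sub_nhds_zero_iff.mp (squeeze_zero_norm' hbound hK)

lemma tendsto_sin_sub_self_div_pow_three :
    Tendsto (fun x => (sin x - x) / x ^ 3) (𝓝[≠] 0) (𝓝 (-(1 / 6))) := by
  refine tendsto_div_pow_three_of_abs_sub_le (K := 1 / 100) fun x hx => ?_
  calc |sin x - x - -(1 / 6) * x ^ 3| = |sin x - (x - x ^ 3 / 6)| := by ring_nf
    _ ≤ |x| ^ 5 / 100 := sin_bound hx
    _ ≤ 1 / 100 * |x| ^ 4 := by
      have := pow_le_pow_of_le_one (abs_nonneg x) hx (show 4 ≤ 5 by norm_num)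
      linarith

lemma tendsto_sin_sub_mul_cos_div_pow_three :
    Tendsto (fun x => (sin x - x * cos x) / x ^ 3) (𝓝[≠] 0) (𝓝 (1 / 3)) := by
  refine tendsto_div_pow_three_of_abs_sub_le (K := 1) fun x hx => ?_
  have h5 := pow_le_pow_of_le_one (abs_nonneg x) hx (show 4 ≤ 5 by norm_num)
  calc |sin x - x * cos x - 1 / 3 * x ^ 3|
      = |(sin x - (x - x ^ 3 / 6)) - x * (cos x - (1 - x ^ 2 / 2))| := by ring_nf
    _ ≤ |sin x - (x - x ^ 3 / 6)| + |x| * |cos x - (1 - x ^ 2 / 2)| := by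
      rw [← abs_mul]; exact abs_sub _ _
    _ ≤ |x| ^ 5 / 100 + |x| * (|x| ^ 4 * (5 / 96)) := by
      gcongr
      exacts [sin_bound hx, cos_bound hx]
    _ = |x| ^ 5 * (1 / 100 + 5 / 96) := by ring
    _ ≤ 1 * |x| ^ 4 := by linarith [pow_nonneg (abs_nonneg x) 4]

lemma tendsto_tan_sub_self_div_pow_three :
    Tendsto (fun x => (tan x - x) / x ^ 3) (𝓝[≠] 0) (𝓝 (1 / 3)) := by
  have hcos : Tendsto cos (𝓝[≠] 0) (𝓝 1) :=
    (continuous_cos.tendsto' 0 1 cos_zero).mono_left nhdsWithin_le_nhds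
  have := tendsto_sin_sub_mul_cos_div_pow_three.div hcos one_ne_zero
  rw [div_one] at this
  refine this.congr' ?_
  filter_upwards [hcos.eventually_ne one_ne_zero] with x hx
  simp only [Pi.div_apply]
  rw [tan_eq_sin_div_cos]
  field_simp

lemma tendsto_sin_div_self : Tendsto (fun x => sin x / x) (𝓝[≠] 0) (𝓝 1) := by
  simpa [hasDerivAt_iff_tendsto_slope, slope_fun_def, div_eq_inv_mul] using hasDerivAt_sin 0

lemma tendsto_tan_div_self : Tendsto (fun x => tan x / x) (𝓝[≠] 0) (𝓝 1) := by
  simpa [hasDerivAt_iff_tendsto_slope, slope_fun_def, div_eq_inv_mul] using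
    hasDerivAt_tan (x := 0) (by simp)

lemma tendsto_zero_of_tendsto_natCast_mul {u : ℕ → ℝ} {a : ℝ}
    (hu : Tendsto (fun n : ℕ => n * u n) atTop (𝓝 a)) : Tendsto u atTop (𝓝 0) := by
  have := hu.mul (tendsto_inv_atTop_nhds_zero_nat (𝕜 := ℝ))
  rw [mul_zero] at this
  refine this.congr' ?_
  filter_upwards [eventually_ne_atTop 0] with n hn
  field_simp

lemma tendsto_natCast_pow_mul_comp {f : ℝ → ℝ} {u : ℕ → ℝ} {k : ℕ} {a c : ℝ}
    (hf : Tendsto (fun x => f x / x ^ k) (𝓝[≠] 0) (𝓝 c))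
    (hu : Tendsto (fun n : ℕ => n * u n) atTop (𝓝 a)) (hu0 : ∀ᶠ n in atTop, u n ≠ 0) :
    Tendsto (fun n : ℕ => (n : ℝ) ^ k * f (u n)) atTop (𝓝 (c * a ^ k)) := by
  have hu' : Tendsto u atTop (𝓝[≠] 0) :=
    tendsto_nhdsWithin_iff.2 ⟨tendsto_zero_of_tendsto_natCast_mul hu, hu0⟩
  refine ((hf.comp hu').mul (hu.pow k)).congr' ?_
  filter_upwards [hu0] with n hn
  simp only [Function.comp_apply]
  field_simp
  ring

lemma abs_log_one_add_sub_le {x : ℝ} (hx : |x| ≤ 1 / 2) :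
    |log (1 + x) - (x - x ^ 2 / 2 + x ^ 3 / 3)| ≤ 2 * |x| ^ 4 := by
  have h := abs_log_sub_add_sum_range_le (show |-x| < 1 by rw [abs_neg]; linarith) 3
  calc |log (1 + x) - (x - x ^ 2 / 2 + x ^ 3 / 3)|
      = |(∑ i ∈ Finset.range 3, (-x) ^ (i + 1) / (i + 1)) + log (1 - -x)| := by
        congr 1
        simp only [Finset.sum_range_succ, Finset.sum_range_zero]
        push_cast
        ring_nf
    _ ≤ |-x| ^ 4 / (1 - |-x|) := h
    _ ≤ 2 * |x| ^ 4 := by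
      rw [abs_neg, div_le_iff₀ (by linarith)]
      nlinarith [pow_nonneg (abs_nonneg x) 4]

lemma abs_mul_log_one_add_inv_sub_le {m : ℝ} (hm : 2 ≤ m) :
    |m * log (1 + 1 / m) - (1 - 1 / (2 * m) + 1 / (3 * m ^ 2))| ≤ 2 / m ^ 3 := by
  have hm0 : 0 < m := by linarith
  have hinv : |1 / m| ≤ 1 / 2 := by
    rw [abs_of_pos (by positivity), div_le_div_iff₀ hm0 two_pos]; linarith
  calc |m * log (1 + 1 / m) - (1 - 1 / (2 * m) + 1 / (3 * m ^ 2))|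
      = m * |log (1 + 1 / m) - (1 / m - (1 / m) ^ 2 / 2 + (1 / m) ^ 3 / 3)| := by
        rw [← abs_of_pos hm0, ← abs_mul, abs_of_pos hm0]
        congr 1
        field_simp
    _ ≤ m * (2 * |1 / m| ^ 4) := by gcongr; exact abs_log_one_add_sub_le hinv
    _ = 2 / m ^ 3 := by
        rw [abs_of_pos (by positivity)]
        field_simp

lemma tendsto_sq_mul_sub_succ_of_abs_le {e : ℝ → ℝ} {C : ℝ}
    (he : ∀ m : ℝ, 2 ≤ m → |e m| ≤ C / m ^ 3) :
    Tendsto (fun n : ℕ => (n : ℝ) ^ 2 * (e n - e (n + 1))) atTop (𝓝 0) := by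
  refine squeeze_zero_norm' ?_ (tendsto_const_div_atTop_nhds_zero_nat (2 * C))
  filter_upwards [eventually_ge_atTop 2] with n hn
  have hn2 : (2 : ℝ) ≤ n := by exact_mod_cast hn
  have hn0 : (0 : ℝ) < n := by linarith
  have hC : 0 ≤ C := by
    have := (abs_nonneg _).trans (he 2 le_rfl)
    norm_num at this
    linarith
  rw [norm_mul, norm_pow, norm_eq_abs, abs_of_pos hn0]
  calc (n : ℝ) ^ 2 * |e n - e (n + 1)| ≤ n ^ 2 * (C / n ^ 3 + C / n ^ 3) := by
        gcongr
        refine (abs_sub _ _).trans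
          (add_le_add (he n hn2) ((he (n + 1) (by linarith)).trans ?_))
        gcongr
        linarith
    _ = 2 * C / n := by field_simp; ring

lemma tendsto_sq_mul_mul_log_one_add_inv_sub_succ :
    Tendsto (fun n : ℕ => (n : ℝ) ^ 2 *
      (n * log (1 + 1 / n) - (n + 1) * log (1 + 1 / (n + 1)))) atTop (𝓝 (-(1 / 2))) := by
  set P : ℝ → ℝ := fun m => 1 - 1 / (2 * m) + 1 / (3 * m ^ 2)
  have hpoly : Tendsto (fun n : ℕ => (n : ℝ) ^ 2 * (P n - P (n + 1))) atTop (𝓝 (-(1 / 2))) := by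
    have hr := tendsto_natCast_div_add_atTop (1 : ℝ)
    have := ((hr.const_mul (-(1 / 2))).add_const (1 / 3)).sub ((hr.pow 2).const_mul (1 / 3))
    norm_num at this
    refine this.congr' ?_
    filter_upwards [eventually_ne_atTop 0] with n hn
    simp only [P]
    field_simp
    ring
  have herr := tendsto_sq_mul_sub_succ_of_abs_le (e := fun m => m * log (1 + 1 / m) - P m)
    (C := 2) fun m hm => abs_mul_log_one_add_inv_sub_le hm
  have := hpoly.add herr
  rw [add_zero] at this
  exact this.congr fun n => by ring

lemma tendsto_sq_mul_natCast_mul_sin_sub_tan_succ {t : ℕ → ℝ} {a d : ℝ}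
    (ht : Tendsto (fun n : ℕ => n * t n) atTop (𝓝 a)) (ht0 : ∀ᶠ n in atTop, t n ≠ 0)
    (hd : Tendsto (fun n : ℕ => (n : ℝ) ^ 2 * (n * t n - (n + 1) * t (n + 1))) atTop (𝓝 d)) :
    Tendsto (fun n : ℕ => (n : ℝ) ^ 2 * (n * sin (t n) - (n + 1) * tan (t (n + 1)))) atTop
      (𝓝 (d - a ^ 3 / 2)) := by
  have hsin := tendsto_natCast_pow_mul_comp tendsto_sin_sub_self_div_pow_three ht ht0
  have htan := (tendsto_add_atTop_iff_nat 1).2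
    (tendsto_natCast_pow_mul_comp tendsto_tan_sub_self_div_pow_three ht ht0)
  have hratio := (tendsto_natCast_div_add_atTop (1 : ℝ)).pow 2
  convert (hsin.add hd).sub (htan.mul hratio) using 2
  · push_cast
    field_simp
    ring
  · ring

lemma sq_mul_abs_one_div_mul_tan_sub_sqrt {x t s : ℝ} (hx : 0 < x) (ht : 0 < sin t)
    (hs : 0 < tan s) :
    x ^ 2 * |1 / ((x + 1) * tan s) - √(1 / x ^ 2 + 1 / (x ^ 2 * tan t ^ 2))| =
      |x ^ 2 * (x * sin t - (x + 1) * tan s)| / ((x + 1) * tan s * (x * sin t)) := by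
  have hA : 0 < (x + 1) * tan s := by positivity
  have hB : 0 < x * sin t := by positivity
  rw [sqrt_one_div_sq_add_one_div_sq_mul_tan_sq hx ht, div_sub_div _ _ hA.ne' hB.ne', one_mul,
    mul_one, abs_div, abs_of_pos (mul_pos hA hB), abs_mul, abs_of_pos (pow_pos hx 2),
    mul_div_assoc]

lemma tendsto_sq_mul_abs_one_div_mul_tan_succ_sub_sqrt {t : ℕ → ℝ} {a d : ℝ} (ha : a ≠ 0)
    (ht : Tendsto (fun n : ℕ => n * t n) atTop (𝓝 a)) (ht0 : ∀ᶠ n in atTop, 0 < t n)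
    (hd : Tendsto (fun n : ℕ => (n : ℝ) ^ 2 * (n * t n - (n + 1) * t (n + 1))) atTop (𝓝 d)) :
    Tendsto (fun n : ℕ => (n : ℝ) ^ 2 * |1 / ((n + 1) * tan (t (n + 1))) -
      √(1 / (n : ℝ) ^ 2 + 1 / ((n : ℝ) ^ 2 * tan (t n) ^ 2))|) atTop
      (𝓝 (|d - a ^ 3 / 2| / (a * a))) := by
  have ht_ne : ∀ᶠ n in atTop, t n ≠ 0 := ht0.mono fun n hn => hn.ne'
  have hnum := tendsto_sq_mul_natCast_mul_sin_sub_tan_succ ht ht_ne hd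
  have hsin := tendsto_natCast_pow_mul_comp (k := 1) (by simpa using tendsto_sin_div_self) ht ht_ne
  have htan := (tendsto_add_atTop_iff_nat 1).2
    (tendsto_natCast_pow_mul_comp (k := 1) (by simpa using tendsto_tan_div_self) ht ht_ne)
  have hden : Tendsto (fun n : ℕ => (n + 1) * tan (t (n + 1)) * (n * sin (t n))) atTop
      (𝓝 (a * a)) := by
    simpa using htan.mul hsin
  have hsmall : ∀ᶠ n in atTop, 0 < t n ∧ t n < π / 2 :=
    ht0.and ((tendsto_zero_of_tendsto_natCast_mul ht).eventually_lt_const (by positivity))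
  refine (hnum.abs.div hden (mul_ne_zero ha ha)).congr' ?_
  filter_upwards [eventually_gt_atTop 0, hsmall, (tendsto_add_atTop_nat 1).eventually hsmall]
    with n hn ⟨htn, htn'⟩ ⟨hsn, hsn'⟩
  rw [sq_mul_abs_one_div_mul_tan_sub_sqrt (Nat.cast_pos.2 hn)
    (sin_pos_of_pos_of_lt_pi htn (by linarith [pi_pos])) (tan_pos_of_pos_of_lt_pi_div_two hsn hsn')]
  rfl

lemma abs_add_one_div {y : ℝ} (hy : y ≠ 0) : |y + 1 / y| = |y| + 1 / |y| := by
  rw [show y + 1 / y = (y ^ 2 + 1) / y by field_simp, abs_div,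
    abs_of_pos (by positivity : 0 < y ^ 2 + 1), ← sq_abs]
  field_simp

/-- Asymptotic expansion of `|δ_n(z)|` for `z = 1 + i·y`:
`n² · |1/((n+1)·tan(|y|·ln((n+2)/(n+1)))) − √(1/n² + 1/(n²·tan(|y|·ln((n+1)/n))²))|`
converges to `(1/2)·|y + 1/y|`. -/
theorem abs_delta_line_one_asymptotic (y : ℝ) (hy : y ≠ 0) :
    Tendsto (fun n : ℕ =>
      (n : ℝ) ^ 2 *
        |1 / (((n : ℝ) + 1) *
            Real.tan (|y| * Real.log (((n : ℝ) + 2) / ((n : ℝ) + 1)))) -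
          Real.sqrt (1 / (n : ℝ) ^ 2 +
            1 / ((n : ℝ) ^ 2 *
              Real.tan (|y| * Real.log (((n : ℝ) + 1) / (n : ℝ))) ^ 2))|)
      atTop (nhds (|y + 1 / y| / 2)) := by
  set a := |y|
  have ha : 0 < a := abs_pos.2 hy
  set t : ℕ → ℝ := fun n => a * log (1 + 1 / n)
  have hnt : Tendsto (fun n : ℕ => n * t n) atTop (𝓝 a) := by
    simpa [t, mul_left_comm] using
      ((tendsto_mul_log_one_add_div_atTop 1).comp tendsto_natCast_atTop_atTop).const_mul a
  have ht_pos : ∀ᶠ n in atTop, 0 < t n :=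
    (eventually_gt_atTop 0).mono fun n hn => mul_pos ha (log_pos (by simp [hn]))
  have hdiff : Tendsto (fun n : ℕ => (n : ℝ) ^ 2 * (n * t n - (n + 1) * t (n + 1))) atTop
      (𝓝 (a * -(1 / 2))) := by
    refine (tendsto_sq_mul_mul_log_one_add_inv_sub_succ.const_mul a).congr fun n => ?_
    simp only [t]
    push_cast
    ring
  have hval : |y + 1 / y| / 2 = |a * -(1 / 2) - a ^ 3 / 2| / (a * a) := by
    rw [abs_add_one_div hy, show a * -(1 / 2) - a ^ 3 / 2 = -(a * (a ^ 2 + 1) / 2) by ring,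
      abs_neg, abs_of_pos (by positivity : 0 < a * (a ^ 2 + 1) / 2)]
    change (a + 1 / a) / 2 = _
    field_simp
  rw [hval]
  refine (tendsto_sq_mul_abs_one_div_mul_tan_succ_sub_sqrt ha.ne' hnt ht_pos hdiff).congr' ?_
  filter_upwards [eventually_gt_atTop 0] with n hn
  have hn' : (n : ℝ) ≠ 0 := by positivity
  rw [show ((n : ℝ) + 2) / (n + 1) = 1 + 1 / ((n + 1 : ℕ) : ℝ) by push_cast; field_simp; ring,
    show ((n : ℝ) + 1) / n = 1 + 1 / n by field_simp]
end

section
/- Let x > 0 and y ≠ 0 be real numbers. Then n^{x+1} · (1/(n^{x}·sqrt(1 + ((1−x)/y)²))) · | 1/sin(y·ln((n+1)/n)) − (1 + 1/n)^{−x} · ( 1/tan(y·ln((n+2)/(n+1))) + (x−1)/y ) | converges, as the natural number n → ∞, to (x² + y²)/(2·sqrt((1−x)² + y²)); equivalently, writing z = x + i·y, the limit equals |z|²/(2·|1−z|). -/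
/-!
Put `t = 1 / n`, so that the logarithms are taken at `1 + t` and `1 + t / (1 + t)`. Up to the
factor `(1 + t) ^ (-x) → 1` the bracket is `deltaSplit x y t`: once the poles `1 / t` cancel, it
is a sum of `1 / sin s - 1 / s` at `s = y log (1 + t)`, `1 / tan s - 1 / s` at
`s = y log (1 + t / (1 + t))`, `(exp (x L) - 1 - x L) / L` at `L = log (1 + t)`, and a difference
of two values of `1 / log (1 + s) - 1 / s`. Each of these vanishes at `0` and is differentiable
there, with derivatives `1 / 6`, `-1 / 3`, `x ^ 2 / 2` and `-1 / 12` coming from the Taylor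
expansions of `sin`, `cos`, `exp` and `log`; so `n * deltaSplit x y (1 / n)` tends to
`(x ^ 2 + y ^ 2) / (2 y)`.
-/

open Filter Topology Real Asymptotics

theorem hasDerivAt_zero_iff_tendsto_div {f : ℝ → ℝ} {c : ℝ} :
    HasDerivAt f c 0 ↔ Tendsto (fun t => (f t - f 0) / t) (𝓝[≠] 0) (𝓝 c) := by
  rw [hasDerivAt_iff_tendsto_slope]
  unfold slope
  simp only [vsub_eq_sub, sub_zero, smul_eq_mul, div_eq_inv_mul]

theorem tendsto_div_pow_of_isBigO_sub {f : ℝ → ℝ} {c : ℝ} {n m : ℕ}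
    (h : (fun s => f s - c * s ^ n) =O[𝓝 0] (· ^ m)) (hnm : n < m) :
    Tendsto (fun s => f s / s ^ n) (𝓝[≠] 0) (𝓝 c) := by
  have h0 := (h.trans_isLittleO (isLittleO_pow_pow hnm)).tendsto_div_nhds_zero
  have := (h0.mono_left (nhdsWithin_le_nhds (s := {0}ᶜ))).const_add c
  rw [add_zero] at this
  refine this.congr' ?_
  filter_upwards [self_mem_nhdsWithin] with s (hs : s ≠ 0)
  field_simp
  ring

theorem isBigO_sin_sub_taylor : (fun s => sin s - (s - s ^ 3 / 6)) =O[𝓝 0] (· ^ 5) := by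
  refine .of_bound (1 / 100) ?_
  filter_upwards [Metric.closedBall_mem_nhds 0 one_pos] with s hs
  simpa [div_eq_inv_mul, abs_pow] using sin_bound (by simpa using hs)

theorem isBigO_cos_sub_taylor : (fun s => cos s - (1 - s ^ 2 / 2)) =O[𝓝 0] (· ^ 4) := by
  refine .of_bound (5 / 96) ?_
  filter_upwards [Metric.closedBall_mem_nhds 0 one_pos] with s hs
  simpa [mul_comm, abs_pow] using cos_bound (by simpa using hs)

theorem isBigO_exp_sub_taylor : (fun s => exp s - (1 + s + s ^ 2 / 2)) =O[𝓝 0] (· ^ 3) := by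
  refine .of_bound (2 / 9) ?_
  filter_upwards [Metric.closedBall_mem_nhds 0 one_pos] with s hs
  have := exp_bound (x := s) (by simpa using hs) (n := 3) (by norm_num)
  norm_num [Finset.sum_range_succ, Nat.factorial] at this
  simpa [mul_comm, abs_pow, add_assoc] using this

theorem isBigO_log_one_add_sub_taylor :
    (fun t => log (1 + t) - (t - t ^ 2 / 2 + t ^ 3 / 3)) =O[𝓝 0] (· ^ 4) := by
  refine .of_bound 2 ?_
  filter_upwards [Metric.ball_mem_nhds 0 (by norm_num : (0:ℝ) < 1 / 2)] with t ht
  rw [Metric.mem_ball, dist_zero_right, norm_eq_abs] at ht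
  have h := abs_log_sub_add_sum_range_le (x := -t) (by rw [abs_neg]; linarith) 3
  norm_num [Finset.sum_range_succ, abs_neg] at h
  rw [norm_eq_abs, norm_eq_abs, abs_pow]
  calc |log (1 + t) - (t - t ^ 2 / 2 + t ^ 3 / 3)|
      = |-t + t ^ 2 / 2 + (-t) ^ 3 / 3 + log (1 + t)| := by ring_nf
    _ ≤ |t| ^ 4 / (1 - |t|) := h
    _ ≤ 2 * |t| ^ 4 := by
      rw [div_le_iff₀ (by linarith)]; nlinarith [pow_nonneg (abs_nonneg t) 4]

theorem hasDerivAt_one_div_sin_sub_one_div :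
    HasDerivAt (fun s => 1 / sin s - 1 / s) (1 / 6) 0 := by
  have hsinc : Tendsto (fun s => sin s / s) (𝓝[≠] 0) (𝓝 1) := by
    simpa using hasDerivAt_zero_iff_tendsto_div.1 (hasDerivAt_sin 0)
  have hrem : Tendsto (fun s => (s - sin s) / s ^ 3) (𝓝[≠] 0) (𝓝 (1 / 6)) :=
    tendsto_div_pow_of_isBigO_sub
      (isBigO_sin_sub_taylor.neg_left.congr_left fun s => by ring) (by norm_num : 3 < 5)
  rw [hasDerivAt_zero_iff_tendsto_div]
  refine ((div_one (1 / 6 : ℝ)) ▸ hrem.div hsinc one_ne_zero).congr' ?_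
  filter_upwards [self_mem_nhdsWithin, hsinc.eventually_ne one_ne_zero] with s (hs : s ≠ 0) hsin
  have : sin s ≠ 0 := by simpa [hs] using hsin
  simp only [Pi.div_apply, sin_zero, div_zero, sub_zero]
  field_simp

theorem hasDerivAt_one_div_tan_sub_one_div :
    HasDerivAt (fun s => 1 / tan s - 1 / s) (-1 / 3) 0 := by
  have hsinc : Tendsto (fun s => sin s / s) (𝓝[≠] 0) (𝓝 1) := by
    simpa using hasDerivAt_zero_iff_tendsto_div.1 (hasDerivAt_sin 0)
  have hbig :
      (fun s => s * (cos s - (1 - s ^ 2 / 2)) - (sin s - (s - s ^ 3 / 6))) =O[𝓝 0] (· ^ 5) :=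
    (((isBigO_refl (fun s : ℝ => s) _).mul isBigO_cos_sub_taylor).congr_right
      fun s => by ring).sub isBigO_sin_sub_taylor
  have hrem : Tendsto (fun s => (s * cos s - sin s) / s ^ 3) (𝓝[≠] 0) (𝓝 (-1 / 3)) :=
    tendsto_div_pow_of_isBigO_sub (hbig.congr_left fun s => by ring) (by norm_num : 3 < 5)
  rw [hasDerivAt_zero_iff_tendsto_div]
  refine ((div_one (-1 / 3 : ℝ)) ▸ hrem.div hsinc one_ne_zero).congr' ?_
  filter_upwards [self_mem_nhdsWithin, hsinc.eventually_ne one_ne_zero] with s (hs : s ≠ 0) hsin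
  have : sin s ≠ 0 := by simpa [hs] using hsin
  simp only [Pi.div_apply, tan_eq_sin_div_cos, sin_zero, zero_div, div_zero, sub_zero,
    one_div_div]
  field_simp

theorem hasDerivAt_exp_mul_sub_one_sub_mul_div (x : ℝ) :
    HasDerivAt (fun L => (exp (x * L) - 1 - x * L) / L) (x ^ 2 / 2) 0 := by
  have hbig : (fun L => exp (x * L) - (1 + x * L + (x * L) ^ 2 / 2)) =O[𝓝 0] (· ^ 3) := by
    have hx : Tendsto (fun L => x * L) (𝓝 0) (𝓝 0) := by
      simpa using (tendsto_id (x := 𝓝 (0:ℝ))).const_mul x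
    refine (isBigO_exp_sub_taylor.comp_tendsto hx).trans ?_
    exact ((isBigO_refl (fun L : ℝ => L ^ 3) _).const_mul_left (x ^ 3)).congr_left
      fun L => by simp [mul_pow]
  have hrem := tendsto_div_pow_of_isBigO_sub (f := fun L => exp (x * L) - 1 - x * L)
    (c := x ^ 2 / 2) (n := 2) (hbig.congr_left fun L => by ring) (by norm_num)
  rw [hasDerivAt_zero_iff_tendsto_div]
  refine hrem.congr' ?_
  filter_upwards [self_mem_nhdsWithin] with L (hL : L ≠ 0)
  simp only [mul_zero, exp_zero, sub_zero, div_zero, sub_self]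
  field_simp

theorem hasDerivAt_log_one_add : HasDerivAt (fun t => log (1 + t)) 1 0 := by
  simpa using ((hasDerivAt_id (0 : ℝ)).const_add 1).log (by norm_num)

-- The junk value `1 / 0 = 0` at `t = 0` is replaced by the limit `1 / 2`.
noncomputable def invLogOneAddSubInv : ℝ → ℝ :=
  Function.update (fun t => 1 / log (1 + t) - 1 / t) 0 (1 / 2)

theorem hasDerivAt_invLogOneAddSubInv : HasDerivAt invLogOneAddSubInv (-1 / 12) 0 := by
  have hlog : Tendsto (fun t => log (1 + t) / t) (𝓝[≠] 0) (𝓝 1) := by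
    simpa using hasDerivAt_zero_iff_tendsto_div.1 hasDerivAt_log_one_add
  have h := isBigO_log_one_add_sub_taylor
  have hbig : (fun t => -(log (1 + t) - (t - t ^ 2 / 2 + t ^ 3 / 3))
      - 1 / 2 * t * (log (1 + t) - (t - t ^ 2 / 2 + t ^ 3 / 3)) - t ^ 4 / 6)
      =O[𝓝 0] (· ^ 4) := by
    have htR :
        (fun t => 1 / 2 * t * (log (1 + t) - (t - t ^ 2 / 2 + t ^ 3 / 3))) =O[𝓝 0] (· ^ 4) :=
      (((isBigO_refl (fun t : ℝ => t) _).const_mul_left (1 / 2)).mul h).trans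
        ((isLittleO_pow_pow (by norm_num : 4 < 5)).isBigO.congr_left fun t => by ring)
    exact (h.neg_left.sub htR).sub
      (((isBigO_refl (fun t : ℝ => t ^ 4) _).const_mul_left (1 / 6)).congr_left fun t => by ring)
  have hrem := tendsto_div_pow_of_isBigO_sub
    (f := fun t => t - log (1 + t) - t * log (1 + t) / 2) (c := -1 / 12) (n := 3)
    (hbig.congr_left fun t => by ring) (by norm_num)
  rw [hasDerivAt_zero_iff_tendsto_div]
  refine ((div_one (-1 / 12 : ℝ)) ▸ hrem.div hlog one_ne_zero).congr' ?_
  filter_upwards [self_mem_nhdsWithin, hlog.eventually_ne one_ne_zero] with t (ht : t ≠ 0) hL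
  have : log (1 + t) ≠ 0 := by simpa [ht] using hL
  simp only [Pi.div_apply, invLogOneAddSubInv, Function.update_self, Function.update_of_ne ht]
  field_simp

theorem hasDerivAt_div_one_add : HasDerivAt (fun t : ℝ => t / (1 + t)) 1 0 := by
  simpa using (hasDerivAt_id' (x := (0 : ℝ))).fun_div
    ((hasDerivAt_id' (x := (0 : ℝ))).const_add 1) (by norm_num)

noncomputable def deltaSplit (x y t : ℝ) : ℝ :=
  (1 + t) ^ x * (1 / sin (y * log (1 + t)) - 1 / (y * log (1 + t)))
    + 1 / y * ((exp (x * log (1 + t)) - 1 - x * log (1 + t)) / log (1 + t))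
    - (1 / tan (y * log (1 + t / (1 + t))) - 1 / (y * log (1 + t / (1 + t))))
    + 1 / y * (invLogOneAddSubInv t - invLogOneAddSubInv (t / (1 + t)))

theorem hasDerivAt_deltaSplit (x y : ℝ) :
    HasDerivAt (deltaSplit x y) (x ^ 2 / (2 * y) + y / 2) 0 := by
  have ha := hasDerivAt_log_one_add
  have hu := hasDerivAt_div_one_add
  have hb := ha.comp_of_eq 0 hu (by simp)
  have hcsc := hasDerivAt_one_div_sin_sub_one_div.comp_of_eq 0 (ha.const_mul y) (by simp)
  have hcot := hasDerivAt_one_div_tan_sub_one_div.comp_of_eq 0 (hb.const_mul y) (by simp)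
  have hexp := (hasDerivAt_exp_mul_sub_one_sub_mul_div x).comp_of_eq 0 ha (by simp)
  have hℓ := hasDerivAt_invLogOneAddSubInv
  have hpow := ((hasDerivAt_id' (x := (0 : ℝ))).const_add 1).rpow_const (p := x) (by norm_num)
  have := (((hpow.mul hcsc).add (hexp.const_mul (1 / y))).sub hcot).add
    ((hℓ.sub (hℓ.comp_of_eq 0 hu (by simp))).const_mul (1 / y))
  refine this.congr_deriv ?_
  simp only [one_mul, add_zero, one_rpow, mul_one, one_div, Function.comp_apply, log_one, mul_zero,
    sin_zero, inv_zero, sub_self, zero_add]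
  field_simp
  ring

theorem deltaSplit_zero (x y : ℝ) : deltaSplit x y 0 = 0 := by
  simp [deltaSplit, invLogOneAddSubInv]

theorem delta_bracket_eq (x : ℝ) {y t : ℝ} (hy : y ≠ 0) (ht : 0 < t) :
    1 / sin (y * log (1 + t))
        - (1 + t) ^ (-x) * (1 / tan (y * log (1 + t / (1 + t))) + (x - 1) / y)
      = (1 + t) ^ (-x) * deltaSplit x y t := by
  have hu : 0 < t / (1 + t) := by positivity
  have ha : log (1 + t) ≠ 0 := (log_pos (by linarith)).ne'
  have hb : log (1 + t / (1 + t)) ≠ 0 := (log_pos (by linarith)).ne'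
  rw [deltaSplit, invLogOneAddSubInv, Function.update_of_ne ht.ne', Function.update_of_ne hu.ne',
    mul_comm x, ← rpow_def_of_pos (by linarith), rpow_neg (by linarith)]
  generalize 1 / sin (y * log (1 + t)) = S
  generalize 1 / tan (y * log (1 + t / (1 + t))) = T
  field_simp
  ring

theorem tendsto_delta_bracket_div (x : ℝ) {y : ℝ} (hy : y ≠ 0) :
    Tendsto (fun t => (1 / sin (y * log (1 + t))
        - (1 + t) ^ (-x) * (1 / tan (y * log (1 + t / (1 + t))) + (x - 1) / y)) / t)
      (𝓝[>] 0) (𝓝 (x ^ 2 / (2 * y) + y / 2)) := by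
  have hG : Tendsto (fun t => deltaSplit x y t / t) (𝓝[>] 0) (𝓝 (x ^ 2 / (2 * y) + y / 2)) := by
    simpa [deltaSplit_zero] using (hasDerivAt_zero_iff_tendsto_div.1
      (hasDerivAt_deltaSplit x y)).mono_left (nhdsGT_le_nhdsNE 0)
  have hp : Tendsto (fun t : ℝ => (1 + t) ^ (-x)) (𝓝[>] 0) (𝓝 1) := by
    have : ContinuousAt (fun t : ℝ => (1 + t) ^ (-x)) 0 :=
      (continuousAt_const.add continuousAt_id).rpow_const (by norm_num)
    simpa using this.tendsto.mono_left nhdsWithin_le_nhds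
  refine ((one_mul (x ^ 2 / (2 * y) + y / 2)) ▸ hp.mul hG).congr' ?_
  filter_upwards [self_mem_nhdsWithin] with t (ht : 0 < t)
  rw [delta_bracket_eq x hy ht, mul_div_assoc]

theorem abs_div_sqrt_one_add_div_sq (x : ℝ) {y : ℝ} (hy : y ≠ 0) :
    |x ^ 2 / (2 * y) + y / 2| / √(1 + ((1 - x) / y) ^ 2)
      = (x ^ 2 + y ^ 2) / (2 * √((1 - x) ^ 2 + y ^ 2)) := by
  have hS : 0 < √((1 - x) ^ 2 + y ^ 2) := sqrt_pos.2 (by positivity)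
  rw [show 1 + ((1 - x) / y) ^ 2 = ((1 - x) ^ 2 + y ^ 2) / y ^ 2 by field_simp; ring,
    sqrt_div' _ (sq_nonneg y), sqrt_sq_eq_abs,
    show x ^ 2 / (2 * y) + y / 2 = (x ^ 2 + y ^ 2) / (2 * y) by field_simp,
    abs_div, abs_mul, abs_two, abs_of_nonneg (by positivity : 0 ≤ x ^ 2 + y ^ 2)]
  field_simp

theorem abs_delta_asymptotic_general (x y : ℝ) (hy : y ≠ 0) :
    Tendsto (fun n : ℕ =>
      (n : ℝ) ^ (x + 1) *
        (1 / ((n : ℝ) ^ x * Real.sqrt (1 + ((1 - x) / y) ^ 2)) *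
          |1 / Real.sin (y * Real.log (((n : ℝ) + 1) / (n : ℝ))) -
            (1 + 1 / (n : ℝ)) ^ (-x) *
              (1 / Real.tan (y * Real.log (((n : ℝ) + 2) / ((n : ℝ) + 1))) +
                (x - 1) / y)|))
      atTop (nhds ((x ^ 2 + y ^ 2) / (2 * Real.sqrt ((1 - x) ^ 2 + y ^ 2)))) := by
  have hn : Tendsto (fun n : ℕ => 1 / (n : ℝ)) atTop (𝓝[>] 0) := by
    simpa [Function.comp_def] using tendsto_inv_atTop_nhdsGT_zero.comp tendsto_natCast_atTop_atTop
  have hlim := (((tendsto_delta_bracket_div x hy).comp hn).abs).div_const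
    (√(1 + ((1 - x) / y) ^ 2))
  rw [abs_div_sqrt_one_add_div_sq x hy] at hlim
  refine hlim.congr' ?_
  filter_upwards [eventually_gt_atTop 0] with n hn
  have hn' : (0 : ℝ) < n := by exact_mod_cast hn
  rw [show ((n : ℝ) + 1) / n = 1 + 1 / n by field_simp,
    show ((n : ℝ) + 2) / (n + 1) = 1 + 1 / n / (1 + 1 / n) by field_simp; ring,
    rpow_add hn', rpow_one]
  simp only [Function.comp_apply, abs_div, abs_one, abs_of_pos hn']
  field_simp

/-- Asymptotic expansion of `|δ_n(z)|` for `z = x + i·y`, `x > 0`, `y ≠ 0`: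
`n^{x+1} · (1/(n^x·√(1+((1−x)/y)²))) · |1/sin(y·ln((n+1)/n)) − (1+1/n)^{−x}·(1/tan(y·ln((n+2)/(n+1))) + (x−1)/y)|`
converges to `(x² + y²)/(2·√((1−x)² + y²)) = |z|²/(2·|1−z|)`. -/
theorem abs_delta_asymptotic (x y : ℝ) (hx : 0 < x) (hy : y ≠ 0) :
    Tendsto (fun n : ℕ =>
      (n : ℝ) ^ (x + 1) *
        (1 / ((n : ℝ) ^ x * Real.sqrt (1 + ((1 - x) / y) ^ 2)) *
          |1 / Real.sin (y * Real.log (((n : ℝ) + 1) / (n : ℝ))) -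
            (1 + 1 / (n : ℝ)) ^ (-x) *
              (1 / Real.tan (y * Real.log (((n : ℝ) + 2) / ((n : ℝ) + 1))) +
                (x - 1) / y)|))
      atTop (nhds ((x ^ 2 + y ^ 2) / (2 * Real.sqrt ((1 - x) ^ 2 + y ^ 2)))) :=
  abs_delta_asymptotic_general x y hy
end

section
/- Let z = x + i·y be a complex number with x > 0 and y ≠ 0. Then N^{x−1} · | (N+1)^{-z}/(1−z) · (1 − x − y/tan(y·ln((N+2)/(N+1)))) | converges, as N → ∞, to 1/|1−z|. Equivalently, the distance |ζ_N(z) − c_N(z)| between the N-th partial sum of the Riemann series and the N-th term of the radial-convergence sequence is asymptotic to 1/(|1−z|·N^{x−1}). -/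
open Filter

/-!
Since `‖(N+1)^{-z}‖ = (N+1)^{-x}`, only the real factor `1 − x − y / tan (y·t_N)` with
`t_N = log ((N+2)/(N+1))` matters. As `tan u ~ u` at `0` and `(N+1)·t_N → 1`, the term
`y / tan (y·t_N)` is asymptotic to `N + 1`, so the factor divided by `N + 1` tends to `−1`,
while `N^{x−1}·(N+1)^{1−x} → 1`.
-/

open Topology

namespace Real

theorem tendsto_div_tan_nhdsNE_zero : Tendsto (fun u : ℝ => u / tan u) (𝓝[≠] 0) (𝓝 1) := by
  have hderiv : HasDerivAt tan 1 0 := by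
    simpa using hasDerivAt_tan (by norm_num : cos 0 ≠ 0)
  have hslope : Tendsto (fun u : ℝ => u⁻¹ * tan u) (𝓝[≠] 0) (𝓝 1) := by
    simpa [slope_fun_def, tan_zero] using hasDerivAt_iff_tendsto_slope.mp hderiv
  simpa [div_eq_mul_inv, mul_comm] using hslope.inv₀ one_ne_zero

theorem tendsto_div_tan_mul_div {α : Type*} {l : Filter α} {s t : α → ℝ} {y : ℝ} (hy : y ≠ 0)
    (ht : Tendsto t l (𝓝[≠] 0)) (hst : Tendsto (fun a => s a * t a) l (𝓝 1)) :
    Tendsto (fun a => y / tan (y * t a) / s a) l (𝓝 1) := by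
  have hyt : Tendsto (fun a => y * t a) l (𝓝[≠] 0) := by
    refine tendsto_nhdsWithin_of_tendsto_nhds_of_eventually_within _ ?_ ?_
    · simpa using (tendsto_nhds_of_tendsto_nhdsWithin ht).const_mul y
    · filter_upwards [eventually_mem_of_tendsto_nhdsWithin ht] with a hta
      exact mul_ne_zero hy hta
  have hquot := (tendsto_div_tan_nhdsNE_zero.comp hyt).div hst one_ne_zero
  rw [div_one] at hquot
  refine hquot.congr' ?_
  filter_upwards [eventually_mem_of_tendsto_nhdsWithin ht] with a (hta : t a ≠ 0)
  simp only [Pi.div_apply, Function.comp_apply]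
  field_simp

end Real

theorem tendsto_succ_mul_log_succ_div_succ :
    Tendsto (fun N : ℕ => ((N : ℝ) + 1) * Real.log (((N : ℝ) + 2) / ((N : ℝ) + 1))) atTop (𝓝 1) := by
  refine (Real.tendsto_mul_log_one_add_div_atTop 1).comp
    (tendsto_atTop_add_const_right _ 1 tendsto_natCast_atTop_atTop) |>.congr fun N => ?_
  simp only [Function.comp_apply]
  congr 2
  field_simp
  ring

theorem tendsto_log_succ_div_succ :
    Tendsto (fun N : ℕ => Real.log (((N : ℝ) + 2) / ((N : ℝ) + 1))) atTop (𝓝[≠] 0) := by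
  refine tendsto_nhdsWithin_of_tendsto_nhds_of_eventually_within _ ?_ (Eventually.of_forall ?_)
  · have := tendsto_succ_mul_log_succ_div_succ.mul
      (tendsto_one_div_add_atTop_nhds_zero_nat (𝕜 := ℝ))
    rw [mul_zero] at this
    refine this.congr fun N => ?_
    field_simp
  · intro N
    refine (Real.log_pos ?_).ne'
    rw [one_lt_div (by positivity)]
    linarith

theorem tendsto_radialFactor_div_succ (x : ℝ) {y : ℝ} (hy : y ≠ 0) :
    Tendsto (fun N : ℕ => (1 - x - y / Real.tan (y * Real.log (((N : ℝ) + 2) / ((N : ℝ) + 1)))) /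
      ((N : ℝ) + 1)) atTop (𝓝 (-1)) := by
  have hconst : Tendsto (fun N : ℕ => (1 - x) * (1 / ((N : ℝ) + 1))) atTop (𝓝 0) := by
    simpa using (tendsto_one_div_add_atTop_nhds_zero_nat (𝕜 := ℝ)).const_mul (1 - x)
  have := hconst.sub
    (Real.tendsto_div_tan_mul_div hy tendsto_log_succ_div_succ tendsto_succ_mul_log_succ_div_succ)
  rw [zero_sub] at this
  refine this.congr fun N => ?_
  ring

theorem tendsto_natCast_rpow_mul_succ_rpow_neg (a : ℝ) :
    Tendsto (fun N : ℕ => (N : ℝ) ^ a * ((N : ℝ) + 1) ^ (-a)) atTop (𝓝 1) := by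
  have := (tendsto_natCast_div_add_atTop (1 : ℝ)).rpow_const (p := a) (Or.inl one_ne_zero)
  rw [Real.one_rpow] at this
  refine this.congr fun N => ?_
  rw [Real.div_rpow (Nat.cast_nonneg N) (by positivity), Real.rpow_neg (by positivity),
    div_eq_mul_inv]

theorem norm_radialCorrection (z : ℂ) (N : ℕ) :
    ‖radialCorrection z N‖ = ((N : ℝ) + 1) ^ (-z.re) *
      |1 - z.re - z.im / Real.tan (z.im * Real.log (((N : ℝ) + 2) / ((N : ℝ) + 1)))| / ‖1 - z‖ := by
  have hcast : (N : ℂ) + 1 = (((N : ℝ) + 1 : ℝ) : ℂ) := by push_cast; rfl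
  rw [radialCorrection, norm_mul, norm_div, hcast,
    Complex.norm_cpow_eq_rpow_re_of_pos (by positivity), Complex.norm_real, Real.norm_eq_abs,
    Complex.neg_re]
  ring

theorem radialCorrection_abs_asymptotic_general (z : ℂ) (hy : z.im ≠ 0) :
    Tendsto (fun N : ℕ => (N : ℝ) ^ (z.re - 1) * ‖radialCorrection z N‖)
      atTop (nhds (1 / ‖1 - z‖)) := by
  have hz : ‖1 - z‖ ≠ 0 := by
    rw [norm_ne_zero_iff, sub_ne_zero]
    rintro rfl
    exact hy Complex.one_im
  have hfactor := (tendsto_radialFactor_div_succ z.re hy).abs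
  rw [abs_neg, abs_one] at hfactor
  have hlim := ((tendsto_natCast_rpow_mul_succ_rpow_neg (z.re - 1)).mul hfactor).div_const ‖1 - z‖
  rw [one_mul] at hlim
  refine hlim.congr fun N => ?_
  have hN : (0 : ℝ) < N + 1 := by positivity
  rw [norm_radialCorrection, abs_div, abs_of_pos hN, neg_sub, Real.rpow_sub hN, Real.rpow_one,
    Real.rpow_neg hN.le]
  field_simp

/-- For `z = x + i·y` with `x > 0`, `y ≠ 0`, the rescaled modulus of the correction term,
`N^{x−1}·|r_N(z)| = N^{x−1}·|c_N(z) − ζ_N(z)|`, converges to `1/|1−z|`: the distance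
between the partial sum and the radial-convergence sequence is asymptotic to
`1/(|1−z|·N^{x−1})`. -/
theorem radialCorrection_abs_asymptotic (z : ℂ) (hx : 0 < z.re) (hy : z.im ≠ 0) :
    Tendsto (fun N : ℕ => (N : ℝ) ^ (z.re - 1) * ‖radialCorrection z N‖)
      atTop (nhds (1 / ‖1 - z‖)) :=
  radialCorrection_abs_asymptotic_general z hy
end
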